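/- arXiv:2309.12197 — 6 statements merged into one kernel-verified Lean document; each statement's English description precedes it below -/
import Mathlib

section
/- Let T > 0 and let x, y : [0,T] → ℝ be càdlàg, where s ↦ x(s−) is a classical simple left-continuous path with times 0 = t₁ < ⋯ < t_{k+1} = T. Let ((u⁽¹⁾,u⁽²⁾), r) ∈ Π((x,y)) be any parametric representation of the ℝ²-valued càdlàg path (x,y). Define z̄ᵢ := sup{ z ∈ [0,1] : r(z) = tᵢ }, z̲ᵢ := inf{ z ∈ [0,1] : r(z) = tᵢ }, and ũ(z) := Σ_{i=1}^{k} u⁽¹⁾(z̲_{i+1}) · ( u⁽²⁾(z ∧ z̄_{i+1}) − u⁽²⁾(z ∧ z̄ᵢ) ) for z ∈ [0,1]. Then ((u⁽¹⁾, u⁽²⁾, ũ), r) is a parametric representation of the ℝ³-valued càdlàg path (x, y, f), i.e. ((u⁽¹⁾,u⁽²⁾,ũ), r) ∈ Π((x, y, f)), where f(t) := ∫₀ᵗ x(s−) dy(s) is the simple integral. -/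
open Set Filter Topology

/-- Left limit of a path, with the convention `f(0-) = f(0)` (and `f(t-) = f(t)` for `t ≤ 0`). -/
noncomputable def lLim {E : Type*} [TopologicalSpace E] [Nonempty E] (f : ℝ → E) (t : ℝ) : E :=
  if 0 < t then limUnder (𝓝[Iio t] t) f else f t

/-- `f` is càdlàg on `[0,T]`. -/
def CadlagOn {E : Type*} [TopologicalSpace E] [Nonempty E] (f : ℝ → E) (T : ℝ) : Prop :=
  (∀ t ∈ Icc (0:ℝ) T, Tendsto f (𝓝[Icc 0 T ∩ Ici t] t) (𝓝 (f t))) ∧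
  (∀ t ∈ Ioc (0:ℝ) T, Tendsto f (𝓝[Iio t] t) (𝓝 (lLim f t)))

/-- The completed graph `Γ_x` of a càdlàg path `x : [0,T] → ℝ^ι`. -/
def completedGraph {ι : Type*} [Fintype ι] (x : ℝ → EuclideanSpace ℝ ι) (T : ℝ) :
    Set (EuclideanSpace ℝ ι × ℝ) :=
  { p | p.2 ∈ Icc (0:ℝ) T ∧ ∃ α ∈ Icc (0:ℝ) 1, p.1 = α • lLim x p.2 + (1 - α) • x p.2 }

/-- The order on the completed graph of `x`. -/
def graphOrder {ι : Type*} [Fintype ι] (x : ℝ → EuclideanSpace ℝ ι)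
    (p q : EuclideanSpace ℝ ι × ℝ) : Prop :=
  p.2 < q.2 ∨ (p.2 = q.2 ∧ ∀ i : ι, |lLim x p.2 i - p.1 i| ≤ |lLim x p.2 i - q.1 i|)

/-- `(u, r)` is a parametric representation of the càdlàg path `x` on `[0,T]`:
a continuous, surjective, order-nondecreasing map from `[0,1]` onto the completed graph. -/
def IsParamRep {ι : Type*} [Fintype ι] (x : ℝ → EuclideanSpace ℝ ι) (T : ℝ)
    (u : ℝ → EuclideanSpace ℝ ι) (r : ℝ → ℝ) : Prop :=
  ContinuousOn (fun z => (u z, r z)) (Icc 0 1) ∧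
  (fun z => (u z, r z)) '' Icc 0 1 = completedGraph x T ∧
  ∀ z₁ ∈ Icc (0:ℝ) 1, ∀ z₂ ∈ Icc (0:ℝ) 1, z₁ ≤ z₂ →
    graphOrder x (u z₁, r z₁) (u z₂, r z₂)

/-- The data of a partition `0 = t₁ < ⋯ < t_{k+1} = T` underlying a classical simple
left-continuous path on `[0,T]`. -/
structure SimpleData (T : ℝ) where
  k : ℕ
  kpos : 1 ≤ k
  t : ℕ → ℝ
  t_one : t 1 = 0
  t_top : t (k + 1) = T
  t_mono : ∀ i, 1 ≤ i → i ≤ k → t i < t (i + 1)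

/-- `h` is a classical simple left-continuous path for the partition `P`, i.e.
`h = h(0)·1_{{0}} + Σ_{i=1}^{k} h(t_{i+1})·1_{(t_i, t_{i+1}]}`. -/
def SimpleData.Represents {T : ℝ} (P : SimpleData T) (h : ℝ → ℝ) : Prop :=
  ∀ i, 1 ≤ i → i ≤ P.k → ∀ s, P.t i < s → s ≤ P.t (i + 1) → h s = h (P.t (i + 1))

/-- The simple integral `∫₀^τ h(s) dz(s) = Σ_{i=1}^{k} h(t_{i+1})·(z(t_{i+1} ∧ τ) − z(t_i ∧ τ))`
of a classical simple left-continuous path `h` (with times from `P`) against `z`. -/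
noncomputable def simpleIntegral {T : ℝ} (P : SimpleData T) (h z : ℝ → ℝ) (τ : ℝ) : ℝ :=
  ∑ i ∈ Finset.Icc 1 P.k, h (P.t (i + 1)) * (z (min (P.t (i + 1)) τ) - z (min (P.t i) τ))

/-!
On the fibre `r⁻¹{t}` over a time `t ∈ (t_j, t_{j+1}]`, both `ũ` and the integral `f(s)` for `s`
just left of `t` are the same affine function of the second coordinate, with slope
`c = x(t_{j+1}−)`: `ũ = f(t) + c (u⁽²⁾ - y(t))` and `f(s) = f(t) + c (y(s) - y(t))`. For `ũ` this
holds because `z̄ᵢ` is the last point of the fibre over `tᵢ`, where `u⁽²⁾ = y(tᵢ)`, and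
`u⁽¹⁾(z̲ᵢ) = x(tᵢ−)` at its first point. So on each fibre `ũ` is the same convex combination of
`f(t−)` and `f(t)` as `u⁽²⁾` is of `y(t−)` and `y(t)`, and its distance to `f(t−)` is `|c|` times
that of `u⁽²⁾` to `y(t−)`: the graph and the order of the parametric representation carry over to
the third coordinate.
-/

def HasLeftLimitsOn {E : Type*} [TopologicalSpace E] [Nonempty E] (f : ℝ → E) (T : ℝ) : Prop :=
  ∀ t ∈ Ioc (0:ℝ) T, Tendsto f (𝓝[<] t) (𝓝 (lLim f t))

section LeftLimit

variable {E : Type*} [TopologicalSpace E] [Nonempty E]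

lemma lLim_of_nonpos (f : ℝ → E) {t : ℝ} (ht : t ≤ 0) : lLim f t = f t :=
  if_neg ht.not_gt

lemma lLim_eq_of_tendsto [T2Space E] {f : ℝ → E} {t : ℝ} {L : E} (ht : 0 < t)
    (hf : Tendsto f (𝓝[<] t) (𝓝 L)) : lLim f t = L := by
  rw [lLim, if_pos ht]
  exact hf.limUnder_eq

end LeftLimit

section EuclideanPaths

variable {ι : Type*} [Fintype ι] {T : ℝ}

lemma lLim_toLp {F : ℝ → ι → ℝ} (hF : ∀ i, HasLeftLimitsOn (fun s => F s i) T) {t : ℝ}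
    (ht : t ∈ Icc 0 T) :
    lLim (fun s => (WithLp.toLp 2 (F s) : EuclideanSpace ℝ ι)) t =
      WithLp.toLp 2 (fun i => lLim (fun s => F s i) t) := by
  rcases ht.1.eq_or_lt with rfl | hpos
  · simp only [lLim_of_nonpos _ le_rfl]
  · exact lLim_eq_of_tendsto hpos <| ((PiLp.continuous_toLp 2 _).tendsto _).comp <|
      tendsto_pi_nhds.2 fun i => hF i t ⟨hpos, ht.2⟩

lemma mem_completedGraph_iff {x : ℝ → EuclideanSpace ℝ ι} {p : EuclideanSpace ℝ ι × ℝ} :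
    p ∈ completedGraph x T ↔ p.2 ∈ Icc 0 T ∧
      ∃ α ∈ Icc (0:ℝ) 1, ∀ i, p.1 i = α * lLim x p.2 i + (1 - α) * x p.2 i := by
  simp [completedGraph, PiLp.ext_iff]

lemma toLp_mem_completedGraph_iff {F : ℝ → ι → ℝ} (hF : ∀ i, HasLeftLimitsOn (fun s => F s i) T)
    {v : ι → ℝ} {t : ℝ} (ht : t ∈ Icc 0 T) :
    (WithLp.toLp 2 v, t) ∈ completedGraph (fun s => WithLp.toLp 2 (F s)) T ↔
      ∃ α ∈ Icc (0:ℝ) 1, ∀ i, v i = α * lLim (fun s => F s i) t + (1 - α) * F t i := by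
  simp [mem_completedGraph_iff, lLim_toLp hF ht, ht]

lemma graphOrder_toLp_iff {F : ℝ → ι → ℝ} (hF : ∀ i, HasLeftLimitsOn (fun s => F s i) T)
    {v w : ι → ℝ} {t t' : ℝ} (ht : t ∈ Icc 0 T) :
    graphOrder (fun s => WithLp.toLp 2 (F s)) (WithLp.toLp 2 v, t) (WithLp.toLp 2 w, t') ↔
      t < t' ∨ t = t' ∧ ∀ i, |lLim (fun s => F s i) t - v i| ≤ |lLim (fun s => F s i) t - w i| := by
  simp [graphOrder, lLim_toLp hF ht]

end EuclideanPaths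

lemma eq_right_of_abs_sub_le_of_eq_convexComb {α a b w : ℝ} (hα : α ∈ Icc (0:ℝ) 1)
    (hw : w = α * a + (1 - α) * b) (hle : |a - b| ≤ |a - w|) : w = b := by
  have hsub : |a - w| = (1 - α) * |a - b| := by
    rw [show a - w = (1 - α) * (a - b) by rw [hw]; ring, abs_mul,
      abs_of_nonneg (by linarith [hα.2])]
  have hzero : α * |a - b| = 0 := by nlinarith [abs_nonneg (a - b), hα.1]
  have : |w - b| = 0 := by
    rw [show w - b = α * (a - b) by rw [hw]; ring, abs_mul, abs_of_nonneg hα.1, hzero]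
  linarith [abs_eq_zero.1 this]

namespace IsParamRep

variable {ι : Type*} [Fintype ι] {x u : ℝ → EuclideanSpace ℝ ι} {T : ℝ} {r : ℝ → ℝ}

lemma mem_completedGraph (hpar : IsParamRep x T u r) {z : ℝ} (hz : z ∈ Icc (0:ℝ) 1) :
    (u z, r z) ∈ completedGraph x T :=
  hpar.2.1 ▸ mem_image_of_mem _ hz

lemma r_mem (hpar : IsParamRep x T u r) {z : ℝ} (hz : z ∈ Icc (0:ℝ) 1) : r z ∈ Icc 0 T :=
  (hpar.mem_completedGraph hz).1

lemma exists_eq (hpar : IsParamRep x T u r) {p : EuclideanSpace ℝ ι × ℝ}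
    (hp : p ∈ completedGraph x T) : ∃ z ∈ Icc (0:ℝ) 1, (u z, r z) = p := by
  rwa [← hpar.2.1] at hp

lemma continuousOn_r (hpar : IsParamRep x T u r) : ContinuousOn r (Icc 0 1) :=
  continuous_snd.comp_continuousOn hpar.1

lemma continuousOn_u (hpar : IsParamRep x T u r) : ContinuousOn u (Icc 0 1) :=
  continuous_fst.comp_continuousOn hpar.1

lemma continuousOn_coord (hpar : IsParamRep x T u r) (i : ι) :
    ContinuousOn (fun z => u z i) (Icc 0 1) :=
  (PiLp.continuous_apply 2 _ i).comp_continuousOn hpar.continuousOn_u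

lemma monotoneOn_r (hpar : IsParamRep x T u r) : MonotoneOn r (Icc 0 1) :=
  fun _ h₁ _ h₂ hle => (hpar.2.2 _ h₁ _ h₂ hle).elim le_of_lt fun h => h.1.le

lemma abs_sub_le_of_r_eq (hpar : IsParamRep x T u r) {z₁ z₂ : ℝ} (hz₁ : z₁ ∈ Icc (0:ℝ) 1)
    (hz₂ : z₂ ∈ Icc (0:ℝ) 1) (hle : z₁ ≤ z₂) (heq : r z₁ = r z₂) (i : ι) :
    |lLim x (r z₁) i - u z₁ i| ≤ |lLim x (r z₁) i - u z₂ i| :=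
  ((hpar.2.2 _ hz₁ _ hz₂ hle).resolve_left heq.not_lt).2 i

variable {t : ℝ}

lemma exists_eq_self (hpar : IsParamRep x T u r) (ht : t ∈ Icc 0 T) :
    ∃ z ∈ Icc (0:ℝ) 1, u z = x t ∧ r z = t := by
  obtain ⟨z, hz, hzp⟩ := hpar.exists_eq (p := (x t, t)) ⟨ht, 0, ⟨le_rfl, zero_le_one⟩, by simp⟩
  exact ⟨z, hz, Prod.ext_iff.1 hzp⟩

lemma exists_eq_lLim (hpar : IsParamRep x T u r) (ht : t ∈ Icc 0 T) :
    ∃ z ∈ Icc (0:ℝ) 1, u z = lLim x t ∧ r z = t := by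
  obtain ⟨z, hz, hzp⟩ := hpar.exists_eq (p := (lLim x t, t)) ⟨ht, 1, ⟨zero_le_one, le_rfl⟩, by simp⟩
  exact ⟨z, hz, Prod.ext_iff.1 hzp⟩

lemma isClosed_fibre (hpar : IsParamRep x T u r) : IsClosed {z | z ∈ Icc (0:ℝ) 1 ∧ r z = t} :=
  hpar.continuousOn_r.preimage_isClosed_of_isClosed isClosed_Icc isClosed_singleton

lemma bddAbove_fibre : BddAbove {z | z ∈ Icc (0:ℝ) 1 ∧ r z = t} := ⟨1, fun _ hz => hz.1.2⟩

lemma bddBelow_fibre : BddBelow {z | z ∈ Icc (0:ℝ) 1 ∧ r z = t} := ⟨0, fun _ hz => hz.1.1⟩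

lemma nonempty_fibre (hpar : IsParamRep x T u r) (ht : t ∈ Icc 0 T) :
    {z | z ∈ Icc (0:ℝ) 1 ∧ r z = t}.Nonempty :=
  let ⟨z, hz, _, hrz⟩ := hpar.exists_eq_self ht
  ⟨z, hz, hrz⟩

lemma sSup_fibre_mem (hpar : IsParamRep x T u r) (ht : t ∈ Icc 0 T) :
    sSup {z | z ∈ Icc (0:ℝ) 1 ∧ r z = t} ∈ {z | z ∈ Icc (0:ℝ) 1 ∧ r z = t} :=
  hpar.isClosed_fibre.csSup_mem (hpar.nonempty_fibre ht) bddAbove_fibre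

lemma sInf_fibre_mem (hpar : IsParamRep x T u r) (ht : t ∈ Icc 0 T) :
    sInf {z | z ∈ Icc (0:ℝ) 1 ∧ r z = t} ∈ {z | z ∈ Icc (0:ℝ) 1 ∧ r z = t} :=
  hpar.isClosed_fibre.csInf_mem (hpar.nonempty_fibre ht) bddBelow_fibre

lemma le_sSup_fibre (hpar : IsParamRep x T u r) (ht : t ∈ Icc 0 T) {z : ℝ}
    (hz : z ∈ Icc (0:ℝ) 1) (hrz : r z ≤ t) : z ≤ sSup {z | z ∈ Icc (0:ℝ) 1 ∧ r z = t} := by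
  obtain ⟨hbar, hrbar⟩ := hpar.sSup_fibre_mem ht
  by_contra! hlt
  have hrz' : r z = t := le_antisymm hrz (hrbar ▸ hpar.monotoneOn_r hbar hz hlt.le)
  exact hlt.not_ge (le_csSup bddAbove_fibre ⟨hz, hrz'⟩)

lemma sSup_fibre_lt (hpar : IsParamRep x T u r) (ht : t ∈ Icc 0 T) {z : ℝ}
    (hz : z ∈ Icc (0:ℝ) 1) (htz : t < r z) : sSup {z | z ∈ Icc (0:ℝ) 1 ∧ r z = t} < z := by
  obtain ⟨hbar, hrbar⟩ := hpar.sSup_fibre_mem ht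
  by_contra! hle
  exact htz.not_ge (hrbar ▸ hpar.monotoneOn_r hz hbar hle)

lemma u_sSup_fibre (hpar : IsParamRep x T u r) (ht : t ∈ Icc 0 T) :
    u (sSup {z | z ∈ Icc (0:ℝ) 1 ∧ r z = t}) = x t := by
  obtain ⟨hbar, hrbar⟩ := hpar.sSup_fibre_mem ht
  obtain ⟨z, hz, huz, hrz⟩ := hpar.exists_eq_self ht
  obtain ⟨-, α, hα, hconv⟩ := mem_completedGraph_iff.1 (hpar.mem_completedGraph hbar)
  dsimp only at hconv
  rw [hrbar] at hconv
  have horder := hpar.abs_sub_le_of_r_eq hz hbar (le_csSup bddAbove_fibre ⟨hz, hrz⟩)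
    (hrz.trans hrbar.symm)
  -- along a fibre `u` moves away from `x t−`, so its last point is at least as far as `x t`
  ext i
  refine eq_right_of_abs_sub_le_of_eq_convexComb hα (hconv i) ?_
  simpa [hrz, hrbar, huz] using horder i

lemma u_sInf_fibre (hpar : IsParamRep x T u r) (ht : t ∈ Icc 0 T) :
    u (sInf {z | z ∈ Icc (0:ℝ) 1 ∧ r z = t}) = lLim x t := by
  obtain ⟨hlow, hrlow⟩ := hpar.sInf_fibre_mem ht
  obtain ⟨z, hz, huz, hrz⟩ := hpar.exists_eq_lLim ht
  have horder := hpar.abs_sub_le_of_r_eq hlow hz (csInf_le bddBelow_fibre ⟨hz, hrz⟩)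
    (hrlow.trans hrz.symm)
  ext i
  have := horder i
  rw [hrlow, huz, sub_self, abs_zero] at this
  linarith [abs_nonpos_iff.1 this]

end IsParamRep

lemma sum_mul_sub_sub_sum_mul_sub_of_step {R : Type*} [CommRing R] (c a b : ℕ → R) {k j : ℕ}
    (hj₁ : 1 ≤ j) (hjk : j ≤ k) (D : R) (hlow : ∀ i, 1 ≤ i → i ≤ j → a i = b i)
    (hhigh : ∀ i, j < i → i ≤ k + 1 → a i - b i = D) :
    ∑ i ∈ Finset.Icc 1 k, c i * (a (i + 1) - a i) - ∑ i ∈ Finset.Icc 1 k, c i * (b (i + 1) - b i)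
      = c j * D := by
  rw [← Finset.sum_sub_distrib, Finset.sum_eq_single_of_mem j (Finset.mem_Icc.2 ⟨hj₁, hjk⟩)]
  · rw [hlow j hj₁ le_rfl, ← hhigh (j + 1) (by omega) (by omega)]
    ring
  · intro i hi hij
    obtain ⟨hi₁, hik⟩ := Finset.mem_Icc.1 hi
    rcases lt_or_gt_of_ne hij with h | h
    · rw [hlow i hi₁ h.le, hlow (i + 1) (by omega) h]
      ring
    · linear_combination c i * (hhigh (i + 1) (by omega) (by omega) - hhigh i h (by omega))

namespace SimpleData

variable {T : ℝ} (P : SimpleData T)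

lemma t_le_t {i j : ℕ} (hi : 1 ≤ i) (hij : i ≤ j) (hj : j ≤ P.k + 1) : P.t i ≤ P.t j := by
  induction j, hij using Nat.le_induction with
  | base => exact le_rfl
  | succ j hij ih => exact (ih (by omega)).trans (P.t_mono j (by omega) (by omega)).le

lemma t_mem_Icc {i : ℕ} (hi : 1 ≤ i) (hik : i ≤ P.k + 1) : P.t i ∈ Icc 0 T :=
  ⟨P.t_one.symm.le.trans (P.t_le_t le_rfl hi hik), (P.t_le_t hi hik le_rfl).trans P.t_top.le⟩

lemma exists_mem_Ioc {t : ℝ} (ht : t ∈ Ioc 0 T) :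
    ∃ j, 1 ≤ j ∧ j ≤ P.k ∧ t ∈ Ioc (P.t j) (P.t (j + 1)) := by
  classical
  have h₁ : P.t 1 < t := P.t_one ▸ ht.1
  refine ⟨Nat.findGreatest (fun i => P.t i < t) P.k, Nat.le_findGreatest P.kpos h₁,
    Nat.findGreatest_le _, Nat.findGreatest_spec (P := fun i => P.t i < t) P.kpos h₁, ?_⟩
  rcases (Nat.findGreatest_le (P := fun i => P.t i < t) P.k).lt_or_eq with hlt | heq
  · exact not_lt.1 (Nat.findGreatest_is_greatest (Nat.lt_succ_self _) hlt)
  · rw [heq, P.t_top]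
    exact ht.2

lemma simpleIntegral_sub_simpleIntegral (h z : ℝ → ℝ) {j : ℕ} (hj₁ : 1 ≤ j) (hjk : j ≤ P.k)
    {s t : ℝ} (hs : s ∈ Icc (P.t j) (P.t (j + 1))) (ht : t ∈ Icc (P.t j) (P.t (j + 1))) :
    simpleIntegral P h z s - simpleIntegral P h z t = h (P.t (j + 1)) * (z s - z t) := by
  unfold simpleIntegral
  refine sum_mul_sub_sub_sum_mul_sub_of_step (fun i => h (P.t (i + 1)))
    (fun i => z (min (P.t i) s)) (fun i => z (min (P.t i) t)) hj₁ hjk _ (fun i hi hij => ?_)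
    (fun i hji hik => ?_)
  · have hle := P.t_le_t hi hij (by omega)
    rw [min_eq_left (hle.trans hs.1), min_eq_left (hle.trans ht.1)]
  · have hle := P.t_le_t (j := i) (by omega) hji hik
    rw [min_eq_right (hs.2.trans hle), min_eq_right (ht.2.trans hle)]

lemma simpleIntegral_zero (h z : ℝ → ℝ) : simpleIntegral P h z 0 = 0 :=
  Finset.sum_eq_zero fun i hi => by
    obtain ⟨hi₁, hik⟩ := Finset.mem_Icc.1 hi
    rw [min_eq_right (P.t_mem_Icc (by omega) (by omega)).1,
      min_eq_right (P.t_mem_Icc hi₁ (by omega)).1, sub_self, mul_zero]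

lemma tendsto_simpleIntegral_nhdsLT (h : ℝ → ℝ) {z : ℝ → ℝ} {j : ℕ} (hj₁ : 1 ≤ j) (hjk : j ≤ P.k)
    {t L : ℝ} (ht : t ∈ Ioc (P.t j) (P.t (j + 1))) (hz : Tendsto z (𝓝[<] t) (𝓝 L)) :
    Tendsto (simpleIntegral P h z) (𝓝[<] t)
      (𝓝 (simpleIntegral P h z t + h (P.t (j + 1)) * (L - z t))) := by
  have hev : (fun s => simpleIntegral P h z t + h (P.t (j + 1)) * (z s - z t))
      =ᶠ[𝓝[<] t] simpleIntegral P h z := by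
    filter_upwards [Ioo_mem_nhdsLT_of_mem ⟨ht.1, le_rfl⟩] with s hs
    linarith [P.simpleIntegral_sub_simpleIntegral h z hj₁ hjk ⟨hs.1.le, hs.2.le.trans ht.2⟩
      ⟨ht.1.le, ht.2⟩]
  exact (tendsto_const_nhds.add (tendsto_const_nhds.mul (hz.sub tendsto_const_nhds))).congr' hev

lemma lLim_simpleIntegral (h : ℝ → ℝ) {z : ℝ → ℝ} (hz : HasLeftLimitsOn z T) {j : ℕ} (hj₁ : 1 ≤ j)
    (hjk : j ≤ P.k) {t : ℝ} (ht : t ∈ Ioc (P.t j) (P.t (j + 1))) :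
    lLim (simpleIntegral P h z) t - simpleIntegral P h z t =
      h (P.t (j + 1)) * (lLim z t - z t) := by
  have ht₀ : 0 < t := lt_of_le_of_lt (P.t_mem_Icc hj₁ (by omega)).1 ht.1
  have htT : t ≤ T := ht.2.trans (P.t_mem_Icc (by omega) (by omega)).2
  rw [lLim_eq_of_tendsto ht₀ (P.tendsto_simpleIntegral_nhdsLT h hj₁ hjk ht (hz t ⟨ht₀, htT⟩))]
  ring

lemma hasLeftLimitsOn_simpleIntegral (h : ℝ → ℝ) {z : ℝ → ℝ} (hz : HasLeftLimitsOn z T) :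
    HasLeftLimitsOn (simpleIntegral P h z) T := by
  intro t ht
  obtain ⟨j, hj₁, hjk, htj⟩ := P.exists_mem_Ioc ht
  rw [eq_add_of_sub_eq' (P.lLim_simpleIntegral h hz hj₁ hjk htj)]
  exact P.tendsto_simpleIntegral_nhdsLT h hj₁ hjk htj (hz t ht)

end SimpleData

section PairFibres

variable {T : ℝ} {x y f u1 u2 r : ℝ → ℝ} {t : ℝ}

lemma hasLeftLimitsOn_pair (hx : HasLeftLimitsOn x T) (hy : HasLeftLimitsOn y T) :
    ∀ i, HasLeftLimitsOn (fun s => ![x s, y s] i) T :=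
  Fin.forall_fin_two.2 ⟨hx, hy⟩

lemma hasLeftLimitsOn_triple (hx : HasLeftLimitsOn x T) (hy : HasLeftLimitsOn y T)
    (hf : HasLeftLimitsOn f T) : ∀ i, HasLeftLimitsOn (fun s => ![x s, y s, f s] i) T := by
  simp only [Fin.forall_fin_succ]
  exact ⟨hx, hy, hf, finZeroElim⟩

lemma toLp_pair_mem_completedGraph_iff (hx : HasLeftLimitsOn x T) (hy : HasLeftLimitsOn y T)
    {a b : ℝ} (ht : t ∈ Icc 0 T) :
    (WithLp.toLp 2 ![a, b], t) ∈ completedGraph (fun t => WithLp.toLp 2 ![x t, y t]) T ↔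
      ∃ α ∈ Icc (0:ℝ) 1, a = α * lLim x t + (1 - α) * x t ∧ b = α * lLim y t + (1 - α) * y t := by
  simpa [Fin.forall_fin_two] using
    toLp_mem_completedGraph_iff (v := ![a, b]) (hasLeftLimitsOn_pair hx hy) ht

lemma toLp_triple_mem_completedGraph_iff (hx : HasLeftLimitsOn x T) (hy : HasLeftLimitsOn y T)
    (hf : HasLeftLimitsOn f T) {v : Fin 3 → ℝ} (ht : t ∈ Icc 0 T) :
    (WithLp.toLp 2 v, t) ∈ completedGraph (fun t => WithLp.toLp 2 ![x t, y t, f t]) T ↔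
      ∃ α ∈ Icc (0:ℝ) 1, v 0 = α * lLim x t + (1 - α) * x t ∧
        v 1 = α * lLim y t + (1 - α) * y t ∧ v 2 = α * lLim f t + (1 - α) * f t := by
  simpa [Fin.forall_fin_succ] using
    toLp_mem_completedGraph_iff (hasLeftLimitsOn_triple hx hy hf) ht

lemma u2_sSup_fibre
    (hpar : IsParamRep (fun t => (WithLp.toLp 2 ![x t, y t] : EuclideanSpace ℝ (Fin 2))) T
      (fun z => (WithLp.toLp 2 ![u1 z, u2 z] : EuclideanSpace ℝ (Fin 2))) r)
    (ht : t ∈ Icc 0 T) : u2 (sSup {z | z ∈ Icc (0:ℝ) 1 ∧ r z = t}) = y t := by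
  simpa using congrArg (· 1) (hpar.u_sSup_fibre ht)

lemma u1_sInf_fibre (hx : HasLeftLimitsOn x T) (hy : HasLeftLimitsOn y T)
    (hpar : IsParamRep (fun t => (WithLp.toLp 2 ![x t, y t] : EuclideanSpace ℝ (Fin 2))) T
      (fun z => (WithLp.toLp 2 ![u1 z, u2 z] : EuclideanSpace ℝ (Fin 2))) r)
    (ht : t ∈ Icc 0 T) : u1 (sInf {z | z ∈ Icc (0:ℝ) 1 ∧ r z = t}) = lLim x t := by
  have h := congrArg (· 0) (hpar.u_sInf_fibre ht)
  rw [lLim_toLp (hasLeftLimitsOn_pair hx hy) ht] at h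
  simpa using h

end PairFibres

theorem IsParamRep.append_affine_on_fibres {T : ℝ} {x y f u1 u2 ut r : ℝ → ℝ}
    (hx : HasLeftLimitsOn x T) (hy : HasLeftLimitsOn y T) (hf : HasLeftLimitsOn f T)
    (hpar : IsParamRep (fun t => (WithLp.toLp 2 ![x t, y t] : EuclideanSpace ℝ (Fin 2))) T
      (fun z => (WithLp.toLp 2 ![u1 z, u2 z] : EuclideanSpace ℝ (Fin 2))) r)
    (hut : ContinuousOn ut (Icc 0 1))
    (haff : ∀ t ∈ Icc (0:ℝ) T, ∃ c : ℝ, lLim f t - f t = c * (lLim y t - y t) ∧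
      ∀ z ∈ Icc (0:ℝ) 1, r z = t → ut z - f t = c * (u2 z - y t)) :
    IsParamRep (fun t => (WithLp.toLp 2 ![x t, y t, f t] : EuclideanSpace ℝ (Fin 3))) T
      (fun z => (WithLp.toLp 2 ![u1 z, u2 z, ut z] : EuclideanSpace ℝ (Fin 3))) r := by
  have ut_convexComb : ∀ z ∈ Icc (0:ℝ) 1, ∀ α : ℝ, u2 z = α * lLim y (r z) + (1 - α) * y (r z) →
      ut z = α * lLim f (r z) + (1 - α) * f (r z) := by
    intro z hz α hu2
    obtain ⟨c, hcf, hcu⟩ := haff (r z) (hpar.r_mem hz)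
    linear_combination hcu z hz rfl - α * hcf + c * hu2
  refine ⟨?_, ?_, ?_⟩
  · refine ContinuousOn.prodMk ((PiLp.continuous_toLp 2 _).comp_continuousOn ?_) hpar.continuousOn_r
    refine continuousOn_pi.2 ?_
    simp only [Fin.forall_fin_succ]
    exact ⟨hpar.continuousOn_coord 0, hpar.continuousOn_coord 1, hut, finZeroElim⟩
  · ext ⟨⟨v⟩, t⟩
    constructor
    · rintro ⟨z, hz, ⟨⟩⟩
      obtain ⟨α, hα, hu₁, hu₂⟩ := (toLp_pair_mem_completedGraph_iff hx hy (hpar.r_mem hz)).1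
        (hpar.mem_completedGraph hz)
      exact (toLp_triple_mem_completedGraph_iff hx hy hf (hpar.r_mem hz)).2
        ⟨α, hα, hu₁, hu₂, ut_convexComb z hz α hu₂⟩
    · intro hv
      obtain ⟨α, hα, hv₀, hv₁, hv₂⟩ := (toLp_triple_mem_completedGraph_iff hx hy hf hv.1).1 hv
      obtain ⟨z, hz, hzp⟩ :=
        hpar.exists_eq ((toLp_pair_mem_completedGraph_iff hx hy hv.1).2 ⟨α, hα, hv₀, hv₁⟩)
      obtain ⟨hu, rfl⟩ := Prod.mk.inj hzp
      have hu₁ : u1 z = v 0 := by simpa using congrArg (· 0) hu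
      have hu₂ : u2 z = v 1 := by simpa using congrArg (· 1) hu
      refine ⟨z, hz, Prod.ext ?_ rfl⟩
      ext i
      fin_cases i
      · exact hu₁
      · exact hu₂
      · exact (ut_convexComb z hz α (hu₂.trans hv₁)).trans hv₂.symm
  · intro z₁ hz₁ z₂ hz₂ hle
    have ht := hpar.r_mem hz₁
    rw [graphOrder_toLp_iff (hasLeftLimitsOn_triple hx hy hf) ht]
    rcases (graphOrder_toLp_iff (hasLeftLimitsOn_pair hx hy) ht).1
      (hpar.2.2 z₁ hz₁ z₂ hz₂ hle) with hlt | ⟨heq, hcoord⟩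
    · exact Or.inl hlt
    refine Or.inr ⟨heq, ?_⟩
    obtain ⟨c, hcf, hcu⟩ := haff _ ht
    have hdist : ∀ z ∈ Icc (0:ℝ) 1, r z = r z₁ →
        lLim f (r z₁) - ut z = c * (lLim y (r z₁) - u2 z) := fun z hz hrz => by
      linear_combination hcf - hcu z hz hrz
    obtain ⟨hcoord₀, hcoord₁⟩ := Fin.forall_fin_two.1 hcoord
    intro i
    fin_cases i
    · exact hcoord₀
    · exact hcoord₁
    · show |lLim f (r z₁) - ut z₁| ≤ |lLim f (r z₁) - ut z₂|
      rw [hdist z₁ hz₁ rfl, hdist z₂ hz₂ heq.symm, abs_mul, abs_mul]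
      exact mul_le_mul_of_nonneg_left hcoord₁ (abs_nonneg c)

theorem exists_common_slope_on_fibre {T : ℝ} {x y u1 u2 r : ℝ → ℝ}
    (hx : HasLeftLimitsOn x T) (hy : HasLeftLimitsOn y T) (P : SimpleData T)
    (hpar : IsParamRep (fun t => (WithLp.toLp 2 ![x t, y t] : EuclideanSpace ℝ (Fin 2))) T
      (fun z => (WithLp.toLp 2 ![u1 z, u2 z] : EuclideanSpace ℝ (Fin 2))) r)
    {zbar zlow : ℕ → ℝ}
    (hzbar : ∀ i, zbar i = sSup {z | z ∈ Icc (0:ℝ) 1 ∧ r z = P.t i})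
    (hzlow : ∀ i, zlow i = sInf {z | z ∈ Icc (0:ℝ) 1 ∧ r z = P.t i})
    {ut : ℝ → ℝ} (hut : ∀ z, ut z = ∑ i ∈ Finset.Icc 1 P.k,
      u1 (zlow (i + 1)) * (u2 (min z (zbar (i + 1))) - u2 (min z (zbar i))))
    {t : ℝ} (ht : t ∈ Icc 0 T) :
    ∃ c : ℝ, lLim (simpleIntegral P (fun s => lLim x s) y) t -
        simpleIntegral P (fun s => lLim x s) y t = c * (lLim y t - y t) ∧
      ∀ z ∈ Icc (0:ℝ) 1, r z = t →
        ut z - simpleIntegral P (fun s => lLim x s) y t = c * (u2 z - y t) := by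
  have le_zbar : ∀ i, 1 ≤ i → i ≤ P.k + 1 → ∀ z ∈ Icc (0:ℝ) 1, r z ≤ P.t i → z ≤ zbar i :=
    fun i hi hik z hz hrz => hzbar i ▸ hpar.le_sSup_fibre (P.t_mem_Icc hi hik) hz hrz
  rcases ht.1.eq_or_lt with rfl | hpos
  · refine ⟨0, by simp [lLim_of_nonpos], fun z hz hrz => ?_⟩
    rw [P.simpleIntegral_zero, hut, zero_mul, sub_zero]
    refine Finset.sum_eq_zero fun i hi => ?_
    obtain ⟨hi₁, hik⟩ := Finset.mem_Icc.1 hi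
    have hrz_le : ∀ j, 1 ≤ j → j ≤ P.k + 1 → r z ≤ P.t j := fun j hj hjk =>
      hrz ▸ (P.t_mem_Icc hj hjk).1
    rw [min_eq_left (le_zbar (i + 1) (by omega) (by omega) z hz (hrz_le _ (by omega) (by omega))),
      min_eq_left (le_zbar i hi₁ (by omega) z hz (hrz_le _ hi₁ (by omega))), sub_self, mul_zero]
  · obtain ⟨j, hj₁, hjk, htj⟩ := P.exists_mem_Ioc ⟨hpos, ht.2⟩
    refine ⟨lLim x (P.t (j + 1)), P.lLim_simpleIntegral _ hy hj₁ hjk htj, fun z hz hrz => ?_⟩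
    have hu₁ : ∀ i ∈ Finset.Icc 1 P.k, u1 (zlow (i + 1)) = lLim x (P.t (i + 1)) := fun i hi =>
      hzlow (i + 1) ▸ u1_sInf_fibre hx hy hpar (P.t_mem_Icc (by simp at hi; omega)
        (by simp at hi; omega))
    rw [hut, Finset.sum_congr rfl fun i hi => by rw [hu₁ i hi]]
    refine sum_mul_sub_sub_sum_mul_sub_of_step (fun i => lLim x (P.t (i + 1)))
      (fun i => u2 (min z (zbar i))) (fun i => y (min (P.t i) t)) hj₁ hjk _
      (fun i hi hij => ?_) (fun i hji hik => ?_)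
    · have hlt : P.t i < r z := hrz ▸ (P.t_le_t hi hij (by omega)).trans_lt htj.1
      have hmem := P.t_mem_Icc hi (by omega)
      rw [min_eq_right (hzbar i ▸ hpar.sSup_fibre_lt hmem hz hlt).le, min_eq_left (hrz ▸ hlt.le),
        hzbar i, u2_sSup_fibre hpar hmem]
    · have hle : t ≤ P.t i := htj.2.trans (P.t_le_t (by omega) hji hik)
      rw [min_eq_left (le_zbar i (by omega) hik z hz (hrz ▸ hle)), min_eq_right hle]

theorem stmt0_general (T : ℝ) (x y : ℝ → ℝ)
    (hx : CadlagOn x T) (hy : CadlagOn y T)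
    (P : SimpleData T)
    (u1 u2 r : ℝ → ℝ)
    (hpar : IsParamRep (fun t => (WithLp.toLp 2 ![x t, y t] : EuclideanSpace ℝ (Fin 2))) T
      (fun z => (WithLp.toLp 2 ![u1 z, u2 z] : EuclideanSpace ℝ (Fin 2))) r)
    (zbar zlow : ℕ → ℝ)
    (hzbar : ∀ i, zbar i = sSup {z | z ∈ Icc (0:ℝ) 1 ∧ r z = P.t i})
    (hzlow : ∀ i, zlow i = sInf {z | z ∈ Icc (0:ℝ) 1 ∧ r z = P.t i})
    (ut : ℝ → ℝ)
    (hut : ∀ z, ut z = ∑ i ∈ Finset.Icc 1 P.k,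
      u1 (zlow (i + 1)) * (u2 (min z (zbar (i + 1))) - u2 (min z (zbar i)))) :
    IsParamRep
      (fun t => (WithLp.toLp 2 ![x t, y t, simpleIntegral P (fun s => lLim x s) y t] :
        EuclideanSpace ℝ (Fin 3)))
      T (fun z => (WithLp.toLp 2 ![u1 z, u2 z, ut z] : EuclideanSpace ℝ (Fin 3))) r := by
  -- also for an empty fibre, whose `sSup` is the junk value `0`
  have hzbar_mem : ∀ i, zbar i ∈ Icc (0:ℝ) 1 := fun i => hzbar i ▸
    ⟨Real.sSup_nonneg fun z hz => hz.1.1, Real.sSup_le (fun z hz => hz.1.2) zero_le_one⟩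
  have hu₂ : ContinuousOn u2 (Icc 0 1) := hpar.continuousOn_coord 1
  have hu₂_stop : ∀ i, ContinuousOn (fun z => u2 (min z (zbar i))) (Icc 0 1) := fun i =>
    hu₂.comp (continuous_id.min continuous_const).continuousOn
      fun z hz => ⟨le_min hz.1 (hzbar_mem i).1, min_le_of_left_le hz.2⟩
  have hut_cont : ContinuousOn ut (Icc 0 1) := by
    rw [funext hut]
    exact continuousOn_finsetSum _ fun i _ =>
      continuousOn_const.mul ((hu₂_stop (i + 1)).sub (hu₂_stop i))
  exact hpar.append_affine_on_fibres hx.2 hy.2 (P.hasLeftLimitsOn_simpleIntegral _ hy.2) hut_cont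
    fun t ht => exists_common_slope_on_fibre hx.2 hy.2 P hpar hzbar hzlow hut ht

/-- given a parametric representation `((u¹,u²), r)` of the pair `(x,y)`, where
`x(·−)` is a classical simple left-continuous path, the triple `((u¹, u², ũ), r)` built from
the explicit formula `ũ` is a parametric representation of `(x, y, ∫₀^· x(s−) dy(s))`. -/
theorem stmt0 (T : ℝ) (hT : 0 < T) (x y : ℝ → ℝ)
    (hx : CadlagOn x T) (hy : CadlagOn y T)
    (P : SimpleData T) (hP : P.Represents (fun s => lLim x s))
    (u1 u2 r : ℝ → ℝ)
    (hpar : IsParamRep (fun t => (WithLp.toLp 2 ![x t, y t] : EuclideanSpace ℝ (Fin 2))) T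
      (fun z => (WithLp.toLp 2 ![u1 z, u2 z] : EuclideanSpace ℝ (Fin 2))) r)
    (zbar zlow : ℕ → ℝ)
    (hzbar : ∀ i, zbar i = sSup {z | z ∈ Icc (0:ℝ) 1 ∧ r z = P.t i})
    (hzlow : ∀ i, zlow i = sInf {z | z ∈ Icc (0:ℝ) 1 ∧ r z = P.t i})
    (ut : ℝ → ℝ)
    (hut : ∀ z, ut z = ∑ i ∈ Finset.Icc 1 P.k,
      u1 (zlow (i + 1)) * (u2 (min z (zbar (i + 1))) - u2 (min z (zbar i)))) :
    IsParamRep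
      (fun t => (WithLp.toLp 2 ![x t, y t, simpleIntegral P (fun s => lLim x s) y t] :
        EuclideanSpace ℝ (Fin 3)))
      T (fun z => (WithLp.toLp 2 ![u1 z, u2 z, ut z] : EuclideanSpace ℝ (Fin 3))) r :=
  stmt0_general T x y hx hy P u1 u2 r hpar zbar zlow hzbar hzlow ut hut
end

section
/- For every càdlàg pair x, y : [0,T] → ℝ^d one has lim_{δ↓0} ŵ^T_δ(x, y) = 0; that is, for every γ > 0 there exists δ > 0 such that whenever 0 ≤ s < t < u with u ≤ s + δ ≤ T and 1 ≤ i ≤ d, one has min( |x⁽ⁱ⁾(s) − x⁽ⁱ⁾(t)|, |y⁽ⁱ⁾(t) − y⁽ⁱ⁾(u)| ) ≤ γ. -/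
open Set Filter Topology

/-- for every càdlàg pair `x, y : [0,T] → ℝ^d`, the consecutive increment
function `ŵ^T_δ(x,y)` tends to `0` as `δ ↓ 0`. -/
theorem stmt4 (d : ℕ) (hd : 1 ≤ d) (T : ℝ) (hT : 0 < T)
    (x y : ℝ → EuclideanSpace ℝ (Fin d))
    (hx : CadlagOn x T) (hy : CadlagOn y T) :
    ∀ γ : ℝ, 0 < γ → ∃ δ : ℝ, 0 < δ ∧
      ∀ s t u : ℝ, 0 ≤ s → s < t → t < u → u ≤ s + δ → s + δ ≤ T →
        ∀ i : Fin d, min |x s i - x t i| |y t i - y u i| ≤ γ := by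
  intro γ hγ
  obtain ⟨hxr, hxl⟩ := hx
  obtain ⟨hyr, hyl⟩ := hy
  have coord : ∀ (v : EuclideanSpace ℝ (Fin d)) (i : Fin d), |v i| ≤ ‖v‖ := by
    intro v i
    rw [EuclideanSpace.norm_eq]
    have h1 : |v i| = Real.sqrt (‖v i‖ ^ 2) := by
      rw [Real.sqrt_sq_eq_abs, Real.norm_eq_abs, abs_abs]
    rw [h1]
    exact Real.sqrt_le_sqrt
      (Finset.single_le_sum (f := fun j => ‖v j‖ ^ 2) (fun j _ => sq_nonneg _) (Finset.mem_univ i))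
  have key : ∀ a : Icc (0:ℝ) T, ∃ ε > 0,
      (∀ r ∈ Icc (0:ℝ) T, (a:ℝ) ≤ r → r < (a:ℝ) + ε → ‖y r - y a‖ < γ/2) ∧
      (∀ r r' : ℝ, 0 ≤ r → (a:ℝ) - ε < r → r < a → (a:ℝ) - ε < r' → r' < a →
        ‖x r - x r'‖ ≤ γ) := by
    rintro ⟨a, ha0, haT⟩
    have hry := (Metric.tendsto_nhdsWithin_nhds.1 (hyr a ⟨ha0, haT⟩)) (γ/2) (by linarith)
    obtain ⟨ε1, hε1, hball1⟩ := hry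
    rcases eq_or_lt_of_le ha0 with h0 | h0
    · refine ⟨ε1, hε1, ?_, ?_⟩
      · intro r hr har hre
        have : dist (y r) (y a) < γ/2 := hball1 ⟨hr, har⟩ (by rw [Real.dist_eq, abs_of_nonneg (by linarith)]; linarith)
        rwa [dist_eq_norm] at this
      · intro r r' hr0 _ hra _ _
        exfalso; simp only [← h0] at hra; linarith
    · have hlx := (Metric.tendsto_nhdsWithin_nhds.1 (hxl a ⟨h0, haT⟩)) (γ/2) (by linarith)
      obtain ⟨ε2, hε2, hball2⟩ := hlx
      refine ⟨min ε1 ε2, lt_min hε1 hε2, ?_, ?_⟩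
      · intro r hr har hre
        have : dist (y r) (y a) < γ/2 := hball1 ⟨hr, har⟩
          (by rw [Real.dist_eq, abs_of_nonneg (by linarith)]
              have := min_le_left ε1 ε2; linarith)
        rwa [dist_eq_norm] at this
      · intro r r' _ hra hra' hr'a hr'a'
        have hm := min_le_right ε1 ε2
        have h1 : dist (x r) (lLim x a) < γ/2 := hball2 hra'
          (by rw [Real.dist_eq, abs_of_nonpos (by linarith)]; linarith)
        have h2 : dist (x r') (lLim x a) < γ/2 := hball2 hr'a'
          (by rw [Real.dist_eq, abs_of_nonpos (by linarith)]; linarith)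
        have := dist_triangle (x r) (lLim x a) (x r')
        rw [dist_comm (lLim x a) (x r')] at this
        rw [← dist_eq_norm]
        linarith
  choose ε hεpos hεy hεx using key
  have hcover : Icc (0:ℝ) T ⊆ ⋃ a : Icc (0:ℝ) T, Ioo ((a:ℝ) - ε a) ((a:ℝ) + ε a) := by
    intro r hr
    exact mem_iUnion.2 ⟨⟨r, hr⟩, by constructor <;> simp <;> [exact hεpos _; exact hεpos _]⟩
  obtain ⟨δ, hδ, hball⟩ := lebesgue_number_lemma_of_metric isCompact_Icc
    (fun a => isOpen_Ioo) hcover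
  refine ⟨δ/2, by linarith, ?_⟩
  intro s t u hs0 hst htu huδ hsT i
  have hsIcc : s ∈ Icc (0:ℝ) T := ⟨hs0, by linarith⟩
  obtain ⟨a, hsub⟩ := hball s hsIcc
  have hta : t ∈ Ioo ((a:ℝ) - ε a) ((a:ℝ) + ε a) := hsub
    (by rw [Metric.mem_ball, Real.dist_eq, abs_of_pos (by linarith)]; linarith)
  have hua : u ∈ Ioo ((a:ℝ) - ε a) ((a:ℝ) + ε a) := hsub
    (by rw [Metric.mem_ball, Real.dist_eq, abs_of_pos (by linarith)]; linarith)
  rcases le_or_gt (a:ℝ) t with hat | hta'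
  · -- t, u on the right of a : use y
    have ht : ‖y t - y (a:ℝ)‖ < γ/2 := hεy a t ⟨by linarith, by linarith⟩ hat hta.2
    have hu : ‖y u - y (a:ℝ)‖ < γ/2 := hεy a u ⟨by linarith, by linarith⟩ (by linarith) hua.2
    refine le_trans (min_le_right _ _) ?_
    have h1 : |y t i - y u i| = |(y t - y u) i| := by simp
    rw [h1]
    refine le_trans (coord _ i) ?_
    have := norm_sub_le_norm_sub_add_norm_sub (y t) (y (a:ℝ)) (y u)
    have h2 : ‖y (a:ℝ) - y u‖ = ‖y u - y (a:ℝ)‖ := norm_sub_rev _ _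
    linarith [this, h2 ▸ this]
  · -- s, t on the left of a : use x
    have hsa : s ∈ Ioo ((a:ℝ) - ε a) ((a:ℝ) + ε a) := hsub (Metric.mem_ball_self hδ)
    have hx' : ‖x s - x t‖ ≤ γ :=
      hεx a s t hs0 hsa.1 (by linarith) hta.1 hta'
    refine le_trans (min_le_left _ _) ?_
    have h1 : |x s i - x t i| = |(x s - x t) i| := by simp
    rw [h1]
    exact le_trans (coord _ i) hx'
end

section
/- Let T > 0 and let A be a set of càdlàg functions α : [0,T] → ℝ^d such that (i) sup_{α∈A} sup_{t∈[0,T]} |α(t)| < ∞ and (ii) lim_{θ↓0} sup_{α∈A} w''(α,θ) = 0, where w'' is the M1 oscillation modulus. Then for every δ > 0 one has sup_{α∈A} N^T_δ(α) < ∞. -/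
open Set Filter Topology
open scoped ENNReal

/-- `v̄(α, r, θ) = sup{ ‖α(t) − α(s)‖ : (r−θ)∨0 ≤ s, t ≤ (r+θ)∧T }`. -/
noncomputable def vbar {E : Type*} [NormedAddCommGroup E] (α : ℝ → E) (T r θ : ℝ) : ℝ≥0∞ :=
  ⨆ (s : ℝ) (t : ℝ) (_ : max (r - θ) 0 ≤ s ∧ s ≤ min (r + θ) T ∧
      max (r - θ) 0 ≤ t ∧ t ≤ min (r + θ) T),
    ENNReal.ofReal ‖α t - α s‖

/-- `w̃(α, θ) = sup_{0≤t≤T} sup{ dist(α(t₂), [α(t₁), α(t₃)]) :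
(t−θ)∨0 ≤ t₁ < t₂ < t₃ ≤ (t+θ)∧T }`. -/
noncomputable def wtil {E : Type*} [NormedAddCommGroup E] [NormedSpace ℝ E]
    (α : ℝ → E) (T θ : ℝ) : ℝ≥0∞ :=
  ⨆ (t : ℝ) (_ : 0 ≤ t ∧ t ≤ T) (t₁ : ℝ) (t₂ : ℝ) (t₃ : ℝ)
    (_ : max (t - θ) 0 ≤ t₁ ∧ t₁ < t₂ ∧ t₂ < t₃ ∧ t₃ ≤ min (t + θ) T),
    ENNReal.ofReal (Metric.infDist (α t₂) (segment ℝ (α t₁) (α t₃)))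

/-- The M1 oscillation modulus `w''(α, θ) = max(w̃(α,θ), v̄(α,0,θ), v̄(α,T,θ))`. -/
noncomputable def wpp {E : Type*} [NormedAddCommGroup E] [NormedSpace ℝ E]
    (α : ℝ → E) (T θ : ℝ) : ℝ≥0∞ :=
  max (wtil α T θ) (max (vbar α T 0 θ) (vbar α T T θ))

/-- The maximal number of `δ`-increments of `α` on `[0,T]`. -/
noncomputable def numIncr {E : Type*} [NormedAddCommGroup E] (α : ℝ → E) (T δ : ℝ) : ℕ∞ :=
  ⨆ (m : ℕ) (_ : ∃ t : ℕ → ℝ, t 1 = 0 ∧ t (2 * m) = T ∧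
      (∀ j, 1 ≤ j → j + 1 ≤ 2 * m → t j ≤ t (j + 1)) ∧
      (∀ i, 1 ≤ i → i ≤ m → δ ≤ ‖α (t (2 * i)) - α (t (2 * i - 1))‖)),
    (m : ℕ∞)

private lemma seg_key {E : Type*} [NormedAddCommGroup E] [NormedSpace ℝ E]
    {a b x : E} {w : ℝ} (hx : Metric.infDist x (segment ℝ a b) ≤ w) :
    ‖x - a‖ + ‖b - x‖ ≤ ‖b - a‖ + 2 * w := by
  have hcomp : IsCompact (segment ℝ a b) := by
    rw [segment_eq_image]
    exact isCompact_Icc.image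
      (((continuous_const.sub continuous_id).smul continuous_const).add
        (continuous_id.smul continuous_const))
  obtain ⟨p, hp, hd⟩ := hcomp.exists_infDist_eq_dist ⟨a, left_mem_segment ℝ a b⟩ x
  obtain ⟨u, v, hu, hv, huv, rfl⟩ := hp
  have hpa : u • a + v • b - a = v • (b - a) := by
    have h : u = 1 - v := by linarith
    rw [h, smul_sub, sub_smul, one_smul]; abel
  have hbp : b - (u • a + v • b) = u • (b - a) := by
    have h : v = 1 - u := by linarith
    rw [h, smul_sub, sub_smul, one_smul]; abel
  have h1 : ‖u • a + v • b - a‖ = v * ‖b - a‖ := by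
    rw [hpa, norm_smul, Real.norm_of_nonneg hv]
  have h2 : ‖b - (u • a + v • b)‖ = u * ‖b - a‖ := by
    rw [hbp, norm_smul, Real.norm_of_nonneg hu]
  have hxp : ‖x - (u • a + v • b)‖ ≤ w := by
    rw [← dist_eq_norm, ← hd]; exact hx
  have t1 : ‖x - a‖ ≤ ‖x - (u • a + v • b)‖ + ‖u • a + v • b - a‖ := by
    have h : x - a = (x - (u • a + v • b)) + (u • a + v • b - a) := by abel
    rw [h]; exact norm_add_le _ _
  have t2 : ‖b - x‖ ≤ ‖b - (u • a + v • b)‖ + ‖x - (u • a + v • b)‖ := by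
    have h : b - x = (b - (u • a + v • b)) - (x - (u • a + v • b)) := by abel
    rw [h]; exact norm_sub_le _ _
  have h3 : u * ‖b - a‖ + v * ‖b - a‖ = ‖b - a‖ := by rw [← add_mul, huv, one_mul]
  linarith [t1, t2]

/-- if a family `A` of càdlàg paths on `[0,T]` is uniformly bounded and its M1
oscillation modulus `w''` tends to `0` as `θ ↓ 0` uniformly over `A`, then for every `δ > 0`
the maximal numbers of `δ`-increments `N^T_δ(α)`, `α ∈ A`, are uniformly bounded. -/
theorem stmt7 {d : ℕ} (T : ℝ) (hT : 0 < T)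
    (A : Set (ℝ → EuclideanSpace ℝ (Fin d)))
    (hA : ∀ α ∈ A, CadlagOn α T)
    (hbdd : ∃ C : ℝ, ∀ α ∈ A, ∀ t ∈ Icc (0:ℝ) T, ‖α t‖ ≤ C)
    (hmod : ∀ ε : ℝ, 0 < ε → ∃ θ : ℝ, 0 < θ ∧ ∀ α ∈ A, wpp α T θ ≤ ENNReal.ofReal ε) :
    ∀ δ : ℝ, 0 < δ → ∃ K : ℕ, ∀ α ∈ A, numIncr α T δ ≤ (K : ℕ∞) := by
  obtain ⟨C₀, hC₀⟩ := hbdd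
  intro δ hδ
  obtain ⟨θ, hθ, hwA⟩ := hmod (δ/8) (by linarith)
  have hC0 : (0:ℝ) ≤ max C₀ 0 := le_max_right _ _
  have hCb : ∀ α ∈ A, ∀ t ∈ Icc (0:ℝ) T, ‖α t‖ ≤ max C₀ 0 :=
    fun α hα t ht => (hC₀ α hα t ht).trans (le_max_left _ _)
  obtain ⟨M, hMdef⟩ : ∃ M : ℕ, M = ⌈4 * max C₀ 0 / δ⌉₊ := ⟨_, rfl⟩
  obtain ⟨J, hJdef⟩ : ∃ J : ℕ, J = ⌊T / θ⌋₊ + 1 := ⟨_, rfl⟩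
  have hJ1 : 1 ≤ J := by rw [hJdef]; exact Nat.le_add_left 1 _
  refine ⟨J * (M + 1), fun α hα => ?_⟩
  -- extract the w̃ bound pointwise
  have hwt : ∀ a : ℝ, 0 ≤ a → a ≤ T → ∀ t₁ t₂ t₃ : ℝ,
      max (a - θ) 0 ≤ t₁ → t₁ < t₂ → t₂ < t₃ → t₃ ≤ min (a + θ) T →
      Metric.infDist (α t₂) (segment ℝ (α t₁) (α t₃)) ≤ δ/8 := by
    intro a ha0 haT t₁ t₂ t₃ h1 h2 h3 h4
    have hW : wtil α T θ ≤ wpp α T θ := by unfold wpp; exact le_max_left _ _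
    have hle : ENNReal.ofReal (Metric.infDist (α t₂) (segment ℝ (α t₁) (α t₃)))
        ≤ ENNReal.ofReal (δ/8) := by
      refine le_trans ?_ (hW.trans (hwA α hα))
      unfold wtil
      exact le_iSup_of_le a <| le_iSup_of_le ⟨ha0, haT⟩ <| le_iSup_of_le t₁ <|
        le_iSup_of_le t₂ <| le_iSup_of_le t₃ <| le_iSup_of_le ⟨h1, h2, h3, h4⟩ le_rfl
    exact (ENNReal.ofReal_le_ofReal_iff (by linarith)).mp hle
  unfold numIncr
  refine iSup_le fun m => iSup_le fun hm => ?_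
  have hnat : m ≤ J * (M + 1) := by
    by_contra hcon
    push_neg at hcon
    obtain ⟨t, ht1, ht2m, hmono, hincr⟩ := hm
    have hmge : M + 1 < m := lt_of_le_of_lt (Nat.le_mul_of_pos_left _ (by omega)) hcon
    have hmono' : ∀ j k, 1 ≤ j → j ≤ k → k ≤ 2*m → t j ≤ t k := by
      intro j k hj hjk hk
      induction k with
      | zero => omega
      | succ k ih =>
        rcases eq_or_lt_of_le hjk with h | h
        · rw [h]
        · exact le_trans (ih (by omega) (by omega)) (hmono k (by omega) (by omega))
    have hrange : ∀ j, 1 ≤ j → j ≤ 2*m → t j ∈ Icc (0:ℝ) T := by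
      intro j h1 h2
      constructor
      · rw [← ht1]; exact hmono' 1 j le_rfl h1 h2
      · rw [← ht2m]; exact hmono' j (2*m) h1 h2 le_rfl
    -- Key: M+1 consecutive δ-increments span more than θ
    have key : ∀ i, 1 ≤ i → i + M ≤ m → t (2*i - 1) + θ < t (2*(i + M)) := by
      intro i hi hiM
      by_contra hle
      push_neg at hle
      have haT : t (2*i - 1) ∈ Icc (0:ℝ) T := hrange _ (by omega) (by omega)
      have hwin : ∀ k₁ k₂ k₃ : ℕ, 2*i - 1 ≤ k₁ → k₁ ≤ k₂ → k₂ ≤ k₃ → k₃ ≤ 2*(i+M) →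
          t k₁ < t k₂ → t k₂ < t k₃ →
          ‖α (t k₂) - α (t k₁)‖ + ‖α (t k₃) - α (t k₂)‖
            ≤ ‖α (t k₃) - α (t k₁)‖ + 2 * (δ/8) := by
        intro k₁ k₂ k₃ hk1 hk2 hk3 hk4 hl1 hl2
        refine seg_key (hwt (t (2*i - 1)) haT.1 haT.2 (t k₁) (t k₂) (t k₃) ?_ hl1 hl2 ?_)
        · have h := hmono' (2*i - 1) k₁ (by omega) hk1 (by omega)
          exact max_le (by linarith) (by linarith [haT.1])
        · have h3 : t k₃ ≤ t (2*(i+M)) := hmono' k₃ (2*(i+M)) (by omega) hk4 (by omega)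
          have hT3 : t k₃ ≤ T := (hrange k₃ (by omega) (by omega)).2
          exact le_min (by linarith) hT3
      have grow : ∀ j, j ≤ M → δ + (j:ℝ) * (δ/2) ≤ ‖α (t (2*(i + j))) - α (t (2*i - 1))‖ := by
        intro j
        induction j with
        | zero => intro _; simpa using hincr i hi (by omega)
        | succ j ih =>
          intro hj
          have hru := ih (by omega)
          have hpair1 : δ ≤ ‖α (t (2*(i+j))) - α (t (2*(i+j) - 1))‖ :=
            hincr (i+j) (by omega) (by omega)
          have hpair2 : δ ≤ ‖α (t (2*(i+j+1))) - α (t (2*(i+j+1) - 1))‖ :=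
            hincr (i+j+1) (by omega) (by omega)
          have hidx : 2*(i+j+1) - 1 = 2*(i+j) + 1 := by omega
          rw [hidx] at hpair2
          have hlt1 : t (2*(i+j) - 1) < t (2*(i+j)) := by
            rcases lt_or_eq_of_le (hmono' (2*(i+j) - 1) (2*(i+j)) (by omega) (by omega) (by omega)) with h | h
            · exact h
            · rw [h, sub_self, norm_zero] at hpair1; linarith
          have hlt2 : t (2*(i+j) + 1) < t (2*(i+j+1)) := by
            rcases lt_or_eq_of_le (hmono' (2*(i+j) + 1) (2*(i+j+1)) (by omega) (by omega) (by omega)) with h | h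
            · exact h
            · rw [h, sub_self, norm_zero] at hpair2; linarith
          have halt : t (2*i - 1) < t (2*(i+j)) :=
            lt_of_le_of_lt (hmono' (2*i - 1) (2*(i+j) - 1) (by omega) (by omega) (by omega)) hlt1
          have huv : t (2*(i+j)) ≤ t (2*(i+j) + 1) :=
            hmono' _ _ (by omega) (by omega) (by omega)
          have halt2 : t (2*i - 1) < t (2*(i+j) + 1) := lt_of_lt_of_le halt huv
          have hrv : ‖α (t (2*(i+j))) - α (t (2*i - 1))‖ - δ/4
              ≤ ‖α (t (2*(i+j) + 1)) - α (t (2*i - 1))‖ := by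
            rcases lt_or_eq_of_le huv with h | h
            · have hw1 := hwin (2*i - 1) (2*(i+j)) (2*(i+j) + 1)
                le_rfl (by omega) (by omega) (by omega) halt h
              have hnn := norm_nonneg (α (t (2*(i+j) + 1)) - α (t (2*(i+j))))
              linarith
            · rw [← h]; linarith
          have hw2 := hwin (2*i - 1) (2*(i+j) + 1) (2*(i+j+1))
            le_rfl (by omega) (by omega) (by omega) halt2 hlt2
          have hidx2 : 2*(i + (j+1)) = 2*(i+j+1) := by omega
          rw [hidx2]
          push_cast
          linarith
      have h1 := grow M le_rfl
      have h2 : ‖α (t (2*(i+M))) - α (t (2*i - 1))‖ ≤ 2 * max C₀ 0 := by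
        have ha := hCb α hα _ (hrange (2*(i+M)) (by omega) (by omega))
        have hb := hCb α hα _ haT
        calc ‖α (t (2*(i+M))) - α (t (2*i - 1))‖
            ≤ ‖α (t (2*(i+M)))‖ + ‖α (t (2*i - 1))‖ := norm_sub_le _ _
          _ ≤ 2 * max C₀ 0 := by linarith
      have hM4 : 4 * max C₀ 0 / δ ≤ (M:ℝ) := by rw [hMdef]; exact Nat.le_ceil _
      have h4 : 4 * max C₀ 0 ≤ (M:ℝ) * δ := by
        rw [div_le_iff₀ hδ] at hM4; linarith
      linarith
    -- count: index of the (1 + j(M+1))-th pair start is ≥ jθ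
    have count : ∀ j, j ≤ J → (j:ℝ) * θ ≤ t (2*(1 + j*(M+1)) - 1) := by
      intro j
      induction j with
      | zero => intro _; norm_num [ht1]
      | succ j ih =>
        intro hj
        obtain ⟨X, hX⟩ : ∃ X : ℕ, j*(M+1) = X := ⟨_, rfl⟩
        obtain ⟨Y, hY⟩ : ∃ Y : ℕ, (j+1)*(M+1) = Y := ⟨_, rfl⟩
        rw [hX] at ih
        rw [hY]
        have hA' : Y < m := by
          rw [← hY]; exact lt_of_le_of_lt (mul_le_mul_left (by omega : j+1 ≤ J) (M+1)) hcon
        have hB : Y = X + (M+1) := by rw [← hX, ← hY]; ring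
        have ihh := ih (by omega)
        have hkey := key (1+X) (by omega) (by omega)
        have hmon2 : t (2*(1+X+M)) ≤ t (2*(1+Y) - 1) := by
          have hidx : 2*(1+Y) - 1 = 2*(1+X+M) + 1 := by omega
          rw [hidx]
          exact hmono' _ _ (by omega) (by omega) (by omega)
        have hkey' : t (2*(1+X) - 1) + θ < t (2*(1+X+M)) := hkey
        push_cast
        have hexp : ((j:ℝ) + 1) * θ = (j:ℝ) * θ + θ := by ring
        linarith
    have hfin := count J le_rfl
    obtain ⟨Z, hZ⟩ : ∃ Z : ℕ, J*(M+1) = Z := ⟨_, rfl⟩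
    rw [hZ] at hfin hcon
    have hT' : t (2*(1+Z) - 1) ≤ T := by
      rw [← ht2m]; exact hmono' _ _ (by omega) (by omega) le_rfl
    have hJT : T / θ < (J:ℝ) := by
      rw [hJdef]; push_cast
      exact Nat.lt_floor_add_one _
    have hTJ : T < (J:ℝ) * θ := by
      rw [div_lt_iff₀ hθ] at hJT; linarith
    linarith
  exact_mod_cast hnat
end

section
/- Let Ω be a set and let ν, σ, σ' : Ω → ℝ be arbitrary functions. Then { ω : σ(ω) ≤ ν(ω) < σ'(ω) } = ⋃_{q₂∈ℚ} ⋂_{q₁∈ℚ} [ ( {q₁ < ν ≤ q₂} ∩ {q₂ < σ'} ) ∪ ( {ν ≤ q₂} ∩ {σ ≤ q₁} ∩ {q₂ < σ'} ) ], where for instance {q₁ < ν ≤ q₂} := { ω : q₁ < ν(ω) ≤ q₂ } and {q₂ < σ'} := { ω : q₂ < σ'(ω) }. -/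
/-- the event that `ν` lies in the random interval `[σ, σ')` can be expressed
through countably many events involving only comparisons with fixed rational times. -/
theorem stmt8 {Ω : Type*} (ν σ σ' : Ω → ℝ) :
    {ω | σ ω ≤ ν ω ∧ ν ω < σ' ω} =
      ⋃ q₂ : ℚ, ⋂ q₁ : ℚ,
        (({ω | (q₁ : ℝ) < ν ω ∧ ν ω ≤ (q₂ : ℝ)} ∩ {ω | (q₂ : ℝ) < σ' ω}) ∪
         ({ω | ν ω ≤ (q₂ : ℝ)} ∩ {ω | σ ω ≤ (q₁ : ℝ)} ∩ {ω | (q₂ : ℝ) < σ' ω})) := by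
  ext ω
  simp only [Set.mem_setOf_eq, Set.mem_iUnion, Set.mem_iInter, Set.mem_union, Set.mem_inter_iff]
  constructor
  · rintro ⟨h1, h2⟩
    obtain ⟨q₂, hq1, hq2⟩ := exists_rat_btwn h2
    refine ⟨q₂, fun q₁ => ?_⟩
    rcases lt_or_ge (q₁ : ℝ) (ν ω) with h | h
    · exact Or.inl ⟨⟨h, hq1.le⟩, hq2⟩
    · exact Or.inr ⟨⟨hq1.le, h1.trans h⟩, hq2⟩
  · rintro ⟨q₂, hq⟩
    have hlt : ν ω < σ' ω := by
      rcases hq 0 with ⟨⟨_, h1⟩, h2⟩ | ⟨⟨h1, _⟩, h2⟩ <;> exact lt_of_le_of_lt h1 h2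
    refine ⟨?_, hlt⟩
    by_contra h
    push_neg at h
    obtain ⟨q₁, hq1, hq2⟩ := exists_rat_btwn h
    rcases hq q₁ with ⟨⟨h1, _⟩, _⟩ | ⟨⟨_, h1⟩, _⟩
    · exact absurd h1 (not_lt.mpr hq1.le)
    · exact absurd h1 (not_le.mpr hq2)
end

section
/- Fix T > 0 and 0 < ε < 1. For n ∈ ℕ with n ≥ 2 and 1/√n − 1/n < T, set aₙ := T + 1/n − 1/√n ∈ (0,T), gₙ(x) := (T + 1/n − x) if aₙ ≤ x < T and gₙ(x) := 0 otherwise, Λₙ(x) := gₙ(x)·sin(1/gₙ(x)) if gₙ(x) > 0 and Λₙ(x) := 0 otherwise, and Ψₙ(x) := (1−ε)^{−1} · f(gₙ(x)) · (1 − (1−ε)x/T) if gₙ(x) > 0 and Ψₙ(x) := 0 otherwise, where f(u) := cos(1/u)/u − sin(1/u) for u > 0. For ω ∈ [0,T] and t ≥ 0 define Mₙ(t, ω) := Ψₙ(ω)·1_{ω ≤ t} − T^{−1}·Λₙ(t ∧ ω). Then: (i) |Λₙ(x)| ≤ 1/√n for all x, and hence |Mₙ(t,ω)| ≤ |Ψₙ(ω)|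 + 1/(T·√n) for all t ≥ 0 and ω ∈ [0,T]; (ii) for every ω ∈ [0,T], sup_{t ≥ 0} |Mₙ(t,ω)| → 0 as n → ∞. -/
open Set Filter Topology

/-- `aₙ = T + 1/n − 1/√n`. -/
noncomputable def aFun (T : ℝ) (n : ℕ) : ℝ := T + 1 / (n:ℝ) - 1 / Real.sqrt n

/-- `gₙ(x) = T + 1/n − x` on `[aₙ, T)`, and `0` otherwise. -/
noncomputable def gFun (T : ℝ) (n : ℕ) (x : ℝ) : ℝ :=
  if aFun T n ≤ x ∧ x < T then T + 1 / (n:ℝ) - x else 0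

/-- `f(u) = cos(1/u)/u − sin(1/u)`. -/
noncomputable def fFun (u : ℝ) : ℝ := Real.cos (1 / u) / u - Real.sin (1 / u)

/-- `Λₙ(x) = gₙ(x)·sin(1/gₙ(x))` when `gₙ(x) > 0`, and `0` otherwise. -/
noncomputable def LamFun (T : ℝ) (n : ℕ) (x : ℝ) : ℝ :=
  if 0 < gFun T n x then gFun T n x * Real.sin (1 / gFun T n x) else 0

/-- `Ψₙ(x) = (1−ε)⁻¹·f(gₙ(x))·(1 − (1−ε)x/T)` when `gₙ(x) > 0`, and `0` otherwise. -/
noncomputable def PsiFun (T ε : ℝ) (n : ℕ) (x : ℝ) : ℝ :=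
  if 0 < gFun T n x then (1 - ε)⁻¹ * fFun (gFun T n x) * (1 - (1 - ε) * x / T) else 0

/-- `Mₙ(t, ω) = Ψₙ(ω)·1_{ω ≤ t} − T⁻¹·Λₙ(t ∧ ω)`. -/
noncomputable def MFun (T ε : ℝ) (n : ℕ) (t ω : ℝ) : ℝ :=
  PsiFun T ε n ω * (if ω ≤ t then 1 else 0) - T⁻¹ * LamFun T n (min t ω)

lemma lam_bd (T : ℝ) (n : ℕ) (x : ℝ) : |LamFun T n x| ≤ 1 / Real.sqrt n := by
  have hs : (0:ℝ) ≤ 1 / Real.sqrt n := by positivity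
  rw [LamFun]
  split_ifs with h
  · have hg : gFun T n x ≤ 1 / Real.sqrt n := by
      rw [gFun]
      split_ifs with hc
      · have h1 := hc.1; rw [aFun] at h1; linarith
      · exact hs
    have hsin : |Real.sin (1 / gFun T n x)| ≤ 1 :=
      abs_le.mpr ⟨Real.neg_one_le_sin _, Real.sin_le_one _⟩
    calc |gFun T n x * Real.sin (1 / gFun T n x)|
        = |gFun T n x| * |Real.sin (1 / gFun T n x)| := abs_mul _ _
      _ ≤ |gFun T n x| * 1 := mul_le_mul_of_nonneg_left hsin (abs_nonneg _)
      _ = gFun T n x := by rw [mul_one, abs_of_pos h]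
      _ ≤ 1 / Real.sqrt n := hg
  · simpa using hs

lemma m_bd (T ε : ℝ) (hT : 0 < T) (n : ℕ) (t ω : ℝ) :
    |MFun T ε n t ω| ≤ |PsiFun T ε n ω| + 1 / (T * Real.sqrt n) := by
  have h1 := lam_bd T n (min t ω)
  have h2 : |PsiFun T ε n ω * (if ω ≤ t then 1 else 0)| ≤ |PsiFun T ε n ω| := by
    rw [abs_mul]
    split_ifs <;> simp
  have h3 : |T⁻¹ * LamFun T n (min t ω)| ≤ 1 / (T * Real.sqrt n) := by
    rw [abs_mul, abs_of_pos (inv_pos.mpr hT)]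
    calc T⁻¹ * |LamFun T n (min t ω)| ≤ T⁻¹ * (1 / Real.sqrt n) := by
          exact mul_le_mul_of_nonneg_left h1 (le_of_lt (inv_pos.mpr hT))
      _ = 1 / (T * Real.sqrt n) := by field_simp
  calc |MFun T ε n t ω|
      ≤ |PsiFun T ε n ω * (if ω ≤ t then 1 else 0)| + |T⁻¹ * LamFun T n (min t ω)| :=
        abs_sub _ _
    _ ≤ |PsiFun T ε n ω| + 1 / (T * Real.sqrt n) := add_le_add h2 h3

/-- (i) `|Λₙ| ≤ 1/√n` everywhere, hence
`|Mₙ(t,ω)| ≤ |Ψₙ(ω)| + 1/(T·√n)` for all `t ≥ 0` and `ω ∈ [0,T]`;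
(ii) for every `ω ∈ [0,T]`, `sup_{t ≥ 0} |Mₙ(t,ω)| → 0` as `n → ∞`. -/
theorem stmt13 (T ε : ℝ) (hT : 0 < T) (hε : 0 < ε) (hε1 : ε < 1) :
    (∀ n : ℕ, 2 ≤ n → 1 / Real.sqrt n - 1 / (n:ℝ) < T →
      (∀ x : ℝ, |LamFun T n x| ≤ 1 / Real.sqrt n) ∧
      (∀ t : ℝ, 0 ≤ t → ∀ ω ∈ Icc (0:ℝ) T,
        |MFun T ε n t ω| ≤ |PsiFun T ε n ω| + 1 / (T * Real.sqrt n))) ∧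
    (∀ ω ∈ Icc (0:ℝ) T,
      Tendsto (fun n : ℕ => ⨆ t : Ici (0:ℝ), |MFun T ε n (t : ℝ) ω|) atTop (𝓝 0)) := by
  constructor
  · intro n _ _
    exact ⟨fun x => lam_bd T n x, fun t _ ω _ => m_bd T ε hT n t ω⟩
  · intro ω hω
    -- 1/√n → 0
    have hsqrt : Tendsto (fun n : ℕ => 1 / Real.sqrt n) atTop (𝓝 0) := by
      have hs : Tendsto (fun n : ℕ => Real.sqrt n) atTop atTop := by
        refine tendsto_atTop_atTop.mpr fun b => ⟨⌈b ^ 2⌉₊, fun n hn => ?_⟩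
        have h2 : (b ^ 2 : ℝ) ≤ n :=
          le_trans (Nat.le_ceil _) (by exact_mod_cast Nat.cast_le.mpr hn)
        calc b ≤ |b| := le_abs_self b
          _ = Real.sqrt (b ^ 2) := (Real.sqrt_sq_eq_abs b).symm
          _ ≤ Real.sqrt n := Real.sqrt_le_sqrt h2
      simp only [one_div]
      exact hs.inv_tendsto_atTop
    -- eventually g ω = 0
    have hg0 : ∀ᶠ n : ℕ in atTop, gFun T n ω = 0 := by
      rcases eq_or_lt_of_le hω.2 with hωT | hωT
      · filter_upwards with n
        rw [gFun, if_neg]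
        rintro ⟨-, h2⟩
        exact absurd h2 (by simp [← hωT])
      · have hdiff : Tendsto (fun n : ℕ => 1 / Real.sqrt n - 1 / (n:ℝ)) atTop (𝓝 0) := by
          have := hsqrt.sub tendsto_one_div_atTop_nhds_zero_nat
          simpa using this
        have hev : ∀ᶠ n : ℕ in atTop, 1 / Real.sqrt n - 1 / (n:ℝ) < T - ω :=
          hdiff.eventually_lt_const (by linarith)
        filter_upwards [hev] with n hn
        rw [gFun, if_neg]
        rintro ⟨h1, -⟩
        rw [aFun] at h1
        linarith
    -- squeeze
    have hbd : ∀ᶠ n : ℕ in atTop,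
        (⨆ t : Ici (0:ℝ), |MFun T ε n (t : ℝ) ω|) ≤ T⁻¹ * (1 / Real.sqrt n) := by
      filter_upwards [hg0] with n hn
      apply Real.iSup_le
      · intro t
        have hpsi : PsiFun T ε n ω = 0 := by
          rw [PsiFun, if_neg]; rw [hn]; exact lt_irrefl 0
        rw [MFun, hpsi, zero_mul, zero_sub, abs_neg, abs_mul,
          abs_of_pos (inv_pos.mpr hT)]
        exact mul_le_mul_of_nonneg_left (lam_bd T n _) (le_of_lt (inv_pos.mpr hT))
      · positivity
    have hnonneg : ∀ n : ℕ, 0 ≤ ⨆ t : Ici (0:ℝ), |MFun T ε n (t : ℝ) ω| := fun n =>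
      Real.iSup_nonneg fun t => abs_nonneg _
    have hlim : Tendsto (fun n : ℕ => T⁻¹ * (1 / Real.sqrt n)) atTop (𝓝 0) := by
      simpa using hsqrt.const_mul T⁻¹
    exact squeeze_zero' (Eventually.of_forall hnonneg) hbd hlim
end

section
/- Let c > 0 and let (z_k)_{k ≥ 0} be a sequence of nonzero real numbers. Define h : ℕ → ℝ by h(1) := 0 and, for k ≥ 1: if sgn(z_k) ≠ sgn(z_{k−1}) and h(k) = −c·sgn(z_{k−1}), then h(k+1) := 0; if sgn(z_k) ≠ sgn(z_{k−1}) and h(k) = 0, then h(k+1) := −c·sgn(z_k); if sgn(z_k) = sgn(z_{k−1}), then h(k+1) := h(k). Then for every k ≥ 1: (i) h(k) ∈ {0, −c·sgn(z_{k−1})} (so the recursion is exhaustive and |h(k)| ≤ c); and (ii) z_k · ( h(k) − h(k+1) ) = c·|z_k| if sgn(z_k) ≠ sgn(z_{k−1}), while z_k · ( h(k) − h(k+1) ) = 0 if sgn(z_k) = sgn(z_{k−1}). -/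
open scoped Classical

/-- The recursion `h(1) = 0`; for `k ≥ 1`:  if `sgn(z_k) ≠ sgn(z_{k−1})` and
`h(k) = −c·sgn(z_{k−1})` then `h(k+1) = 0`; if `sgn(z_k) ≠ sgn(z_{k−1})` and `h(k) = 0` then
`h(k+1) = −c·sgn(z_k)`; if `sgn(z_k) = sgn(z_{k−1})` then `h(k+1) = h(k)`. -/
noncomputable def hRec (c : ℝ) (z : ℕ → ℝ) : ℕ → ℝ
  | 0 => 0
  | 1 => 0
  | (k + 2) =>
      if Real.sign (z (k + 1)) ≠ Real.sign (z k) ∧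
          hRec c z (k + 1) = -c * Real.sign (z k) then 0
      else if Real.sign (z (k + 1)) ≠ Real.sign (z k) ∧ hRec c z (k + 1) = 0 then
        -c * Real.sign (z (k + 1))
      else hRec c z (k + 1)

lemma sign_cases {x : ℝ} (hx : x ≠ 0) : Real.sign x = 1 ∨ Real.sign x = -1 := by
  rcases hx.lt_or_gt with h | h
  · right; exact Real.sign_of_neg h
  · left; exact Real.sign_of_pos h

lemma mul_sign {x : ℝ} (hx : x ≠ 0) : x * Real.sign x = |x| := by
  rcases hx.lt_or_gt with h | h
  · rw [Real.sign_of_neg h, abs_of_neg h]; ring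
  · rw [Real.sign_of_pos h, abs_of_pos h]; ring

/-- Part (i) as a standalone induction. -/
lemma hRec_mem (c : ℝ) (z : ℕ → ℝ) :
    ∀ k : ℕ, 1 ≤ k →
      hRec c z k = 0 ∨ hRec c z k = -c * Real.sign (z (k - 1)) := by
  intro k hk
  induction k with
  | zero => omega
  | succ k ih =>
    rcases Nat.eq_or_lt_of_le hk with h1 | h1
    · left; rw [← h1]; rfl
    · have hk1 : 1 ≤ k := by omega
      obtain ⟨m, rfl⟩ : ∃ m, k = m + 1 := ⟨k - 1, by omega⟩
      show hRec c z (m + 2) = 0 ∨ hRec c z (m + 2) = -c * Real.sign (z (m + 1))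
      rw [hRec]
      split_ifs with h2 h3
      · left; rfl
      · right; rfl
      · rcases ih hk1 with h | h
        · left; exact h
        · right
        -- h2 is false but its second conjunct holds, so signs are equal
          have hs : Real.sign (z (m + 1)) = Real.sign (z m) := by
            by_contra hs
            exact h2 ⟨hs, h⟩
          simp only [Nat.add_sub_cancel] at h
          rw [h, hs]

/-- for every `k ≥ 1`: (i) `h(k) ∈ {0, −c·sgn(z_{k−1})}` (so `|h(k)| ≤ c`), and
(ii) `z_k·(h(k) − h(k+1)) = c·|z_k|` if `sgn(z_k) ≠ sgn(z_{k−1})`, while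
`z_k·(h(k) − h(k+1)) = 0` if `sgn(z_k) = sgn(z_{k−1})`. -/
theorem stmt16 (c : ℝ) (hc : 0 < c) (z : ℕ → ℝ) (hz : ∀ k, z k ≠ 0) :
    ∀ k : ℕ, 1 ≤ k →
      ((hRec c z k = 0 ∨ hRec c z k = -c * Real.sign (z (k - 1))) ∧ |hRec c z k| ≤ c) ∧
      ((Real.sign (z k) ≠ Real.sign (z (k - 1)) →
          z k * (hRec c z k - hRec c z (k + 1)) = c * |z k|) ∧
       (Real.sign (z k) = Real.sign (z (k - 1)) →
          z k * (hRec c z k - hRec c z (k + 1)) = 0)) := by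
  intro k hk
  obtain ⟨m, rfl⟩ : ∃ m, k = m + 1 := ⟨k - 1, by omega⟩
  have hmem := hRec_mem c z (m + 1) (by omega)
  simp only [Nat.add_sub_cancel] at hmem ⊢
  have habs : |hRec c z (m + 1)| ≤ c := by
    rcases hmem with h | h
    · rw [h]; simpa using hc.le
    · rw [h, abs_mul, abs_neg, abs_of_pos hc]
      rcases sign_cases (hz m) with hs | hs <;> simp [hs]
  refine ⟨⟨hmem, habs⟩, ?_, ?_⟩
  · intro hne
    have hmul := mul_sign (hz (m + 1))
    rcases hmem with h | h
    · have step : hRec c z (m + 2) = -c * Real.sign (z (m + 1)) := by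
        rw [hRec, if_neg, if_pos ⟨hne, h⟩]
        rintro ⟨-, hco⟩
        rw [h] at hco
        rcases sign_cases (hz m) with hs | hs <;> rw [hs] at hco <;> nlinarith
      rw [show m + 1 + 1 = m + 2 from rfl, step, h]
      linear_combination c * hmul
    · have step : hRec c z (m + 2) = 0 := by
        rw [hRec, if_pos ⟨hne, h⟩]
      have hs : Real.sign (z m) = -Real.sign (z (m + 1)) := by
        rcases sign_cases (hz m) with h1 | h1 <;>
            rcases sign_cases (hz (m + 1)) with h2 | h2
        · exact absurd (h2.trans h1.symm) hne
        · rw [h1, h2]; try norm_num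
        · rw [h1, h2]; try norm_num
        · exact absurd (h2.trans h1.symm) hne
      rw [show m + 1 + 1 = m + 2 from rfl, step, h, hs]
      linear_combination c * hmul
  · intro heq
    have key : hRec c z (m + 2) = hRec c z (m + 1) := by
      rw [hRec]
      split_ifs with h2 h3
      · exact absurd heq h2.1
      · exact absurd heq h3.1
      · rfl
    rw [key]; ring
end
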